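/- Let G = (Φ, Σ, R, 𝒮) be a regular tree grammar and G' its subset-construction determinization with starting set 𝒮' = { A' : A' ∩ 𝒮 ≠ ∅ }. Then L(G) = L(G'). -/

import Mathlib

structure Rule (N : Type) (α : Type) where
  lhs : N
  sym : α
  rhs : List N
deriving DecidableEq

inductive RTree (α : Type) where
  | node : α → List (RTree α) → RTree α

def RTree.size {α : Type} : RTree α → Nat
  | .node _ ys => 1 + (ys.attach.map (fun y => RTree.size y.1)).sum
decreasing_by have := List.sizeOf_lt_of_mem y.2; simp only [RTree.node.sizeOf_spec]; omega

def RTree.children {α : Type} : RTree α → List (RTree α)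
  | .node _ ys => ys

def RTree.root {α : Type} : RTree α → α
  | .node x _ => x

def RTree.dfs {α : Type} : RTree α → List (RTree α)
  | .node x ys => (ys.attach.map (fun y => RTree.dfs y.1)).flatten ++ [.node x ys]
decreasing_by have := List.sizeOf_lt_of_mem y.2; simp only [RTree.node.sizeOf_spec]; omega

inductive GenList {N α : Type} (R : Set (Rule N α)) :
    List (Rule N α) → List N → List (RTree α) → Prop where
  | nil : GenList R [] [] []
  | step {r : Rule N α} {rs : List (Rule N α)} {stack : List N}
      {ys ts : List (RTree α)} :
      r ∈ R →
      ys.length = r.rhs.length →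
      GenList R rs (r.rhs ++ stack) (ys ++ ts) →
      GenList R (r :: rs) (r.lhs :: stack) (RTree.node r.sym ys :: ts)

def GenSeq {N α : Type} (R : Set (Rule N α)) (rs : List (Rule N α))
    (A : N) (t : RTree α) : Prop :=
  GenList R rs [A] [t]

def Lang {N α : Type} (R : Set (Rule N α)) (A : N) : Set (RTree α) :=
  {t | ∃ rs, GenSeq R rs A t}

def LangN {N α : Type} (R : Set (Rule N α)) (A : N) (n : Nat) : Set (RTree α) :=
  {t ∈ Lang R A | t.size ≤ n}

def Deterministic {N α : Type} (R : Set (Rule N α)) : Prop :=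
  ∀ r ∈ R, ∀ r' ∈ R, r.sym = r'.sym → r.rhs = r'.rhs → r = r'

def parse {N α : Type} [DecidableEq N] [DecidableEq α] (R : List (Rule N α)) :
    RTree α → Option (N × List (Rule N α))
  | RTree.node x ys => do
    let res ← ys.attach.mapM (fun y => parse R y.1)
    match R.find? (fun r => r.sym == x && r.rhs == res.map Prod.fst) with
    | some r => some (r.lhs, r :: (res.map Prod.snd).flatten)
    | none => none
decreasing_by have := List.sizeOf_lt_of_mem y.2; simp only [RTree.node.sizeOf_spec]; omega

/-!
By induction on trees, a tree `t` is derived in the subset grammar from exactly one nonterminal,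
namely the set `derivers R t` of all nonterminals of the original grammar deriving `t`, and it is
derived from it as soon as that set is nonempty. So `t` is derived from a start symbol in `S` iff
`derivers R t` meets `S`.
-/

theorem List.Forall₂.exists_of_mem_right {α β : Type*} {R : α → β → Prop} {l₁ : List α}
    {l₂ : List β} (h : List.Forall₂ R l₁ l₂) {b : β} (hb : b ∈ l₂) : ∃ a ∈ l₁, R a b := by
  induction h with
  | nil => simp at hb
  | cons hab _ ih =>
    rcases List.mem_cons.mp hb with rfl | hb
    · exact ⟨_, List.mem_cons_self, hab⟩
    · obtain ⟨a, ha, hR⟩ := ih hb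
      exact ⟨a, List.mem_cons_of_mem _ ha, hR⟩

theorem List.Forall₂.imp_of_mem_right {α β : Type*} {R S : α → β → Prop} {l₁ : List α}
    {l₂ : List β} (H : ∀ a b, b ∈ l₂ → R a b → S a b) (h : List.Forall₂ R l₁ l₂) :
    List.Forall₂ S l₁ l₂ := by
  induction h with
  | nil => exact .nil
  | cons hab _ ih =>
    exact .cons (H _ _ List.mem_cons_self hab)
      (ih fun a b hb => H a b (List.mem_cons_of_mem _ hb))

theorem RTree.induction_on {α : Type} {P : RTree α → Prop}
    (node : ∀ x ys, (∀ y ∈ ys, P y) → P (RTree.node x ys)) : ∀ t, P t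
  | RTree.node x ys => node x ys fun y _ => RTree.induction_on node y
decreasing_by have := List.sizeOf_lt_of_mem ‹y ∈ ys›; simp only [RTree.node.sizeOf_spec]; omega

section Derivations

variable {N α : Type} {R : Set (Rule N α)}

theorem GenList.append {rs₁ rs₂ : List (Rule N α)} {s₁ s₂ : List N} {ts₁ ts₂ : List (RTree α)}
    (h₁ : GenList R rs₁ s₁ ts₁) (h₂ : GenList R rs₂ s₂ ts₂) :
    GenList R (rs₁ ++ rs₂) (s₁ ++ s₂) (ts₁ ++ ts₂) := by
  induction h₁ with
  | nil => exact h₂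
  | step hr hlen _ ih =>
    simp only [List.cons_append]
    exact .step hr hlen (by simpa only [List.append_assoc] using ih)

theorem exists_genList_of_forall₂ {stack : List N} {ts : List (RTree α)}
    (h : List.Forall₂ (fun A t => t ∈ Lang R A) stack ts) : ∃ rs, GenList R rs stack ts := by
  induction h with
  | nil => exact ⟨[], .nil⟩
  | cons hA _ ih =>
    obtain ⟨rs₁, h₁⟩ := hA
    obtain ⟨rs₂, h₂⟩ := ih
    exact ⟨rs₁ ++ rs₂, h₁.append h₂⟩

theorem GenList.forall₂_mem_lang {rs : List (Rule N α)} {stack : List N}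
    {ts : List (RTree α)} (h : GenList R rs stack ts) :
    List.Forall₂ (fun A t => t ∈ Lang R A) stack ts := by
  induction h with
  | nil => exact .nil
  | @step r _ stack ys ts hr hlen _ ih =>
    have hrhs : List.Forall₂ (fun A t => t ∈ Lang R A) r.rhs ys := by
      simpa [List.take_left' hlen.symm] using List.forall₂_take_append _ _ _ ih
    have hstack : List.Forall₂ (fun A t => t ∈ Lang R A) stack ts := by
      simpa [List.drop_left' hlen.symm] using List.forall₂_drop_append _ _ _ ih
    obtain ⟨rs, hys⟩ := exists_genList_of_forall₂ hrhs
    exact .cons ⟨r :: rs, .step hr hlen (by simpa using hys)⟩ hstack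

theorem mem_lang_node_iff {A : N} {x : α} {ys : List (RTree α)} :
    RTree.node x ys ∈ Lang R A ↔
      ∃ Bs, ⟨A, x, Bs⟩ ∈ R ∧ List.Forall₂ (fun B y => y ∈ Lang R B) Bs ys := by
  constructor
  · rintro ⟨rs, h⟩
    cases h with
    | step hr _ h => exact ⟨_, hr, by simpa using h.forall₂_mem_lang⟩
  · rintro ⟨Bs, hr, hBs⟩
    obtain ⟨rs, h⟩ := exists_genList_of_forall₂ hBs
    exact ⟨_ :: rs, .step (r := ⟨A, x, Bs⟩) hr hBs.length_eq.symm (by simpa using h)⟩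

end Derivations

section SubsetConstruction

variable {N α : Type}

def derivers (R : Set (Rule N α)) (t : RTree α) : Set N :=
  {A | t ∈ Lang R A}

def subsetLhs (R : Set (Rule N α)) (x : α) (Bs' : List (Set N)) : Set N :=
  {A | ∃ Bs : List N, ⟨A, x, Bs⟩ ∈ R ∧ List.Forall₂ (fun B B' => B ∈ B') Bs Bs'}

def IsSubsetConstruction (R : Set (Rule N α)) (R' : Set (Rule (Set N) α)) : Prop :=
  ∀ r' : Rule (Set N) α, r' ∈ R' ↔ r'.lhs = subsetLhs R r'.sym r'.rhs ∧ r'.lhs.Nonempty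

theorem subsetLhs_map_derivers (R : Set (Rule N α)) (x : α) (ys : List (RTree α)) :
    subsetLhs R x (ys.map (derivers R)) = derivers R (.node x ys) := by
  ext A
  simp only [subsetLhs, derivers, Set.mem_ofPred_eq, mem_lang_node_iff,
    List.forall₂_map_right_iff]

variable {R : Set (Rule N α)} {R' : Set (Rule (Set N) α)}

theorem eq_derivers_of_mem_lang (hR' : IsSubsetConstruction R R') {t : RTree α} {A' : Set N}
    (ht : t ∈ Lang R' A') : A' = derivers R t := by
  induction t using RTree.induction_on generalizing A' with
  | node x ys ih =>
    obtain ⟨Bs', hr', hBs'⟩ := mem_lang_node_iff.mp ht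
    have hmap : Bs' = ys.map (derivers R) := by
      rw [← List.forall₂_eq_eq_eq, List.forall₂_map_right_iff]
      exact hBs'.imp_of_mem_right fun B' y hy hyB' => ih y hy hyB'
    have hlhs : A' = subsetLhs R x Bs' := ((hR' _).mp hr').1
    rw [hlhs, hmap, subsetLhs_map_derivers]

theorem mem_lang_derivers (hR' : IsSubsetConstruction R R') {t : RTree α} {A : N}
    (ht : t ∈ Lang R A) : t ∈ Lang R' (derivers R t) := by
  induction t using RTree.induction_on generalizing A with
  | node x ys ih =>
    obtain ⟨Bs, -, hBs⟩ := mem_lang_node_iff.mp ht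
    have hrule : ⟨derivers R (.node x ys), x, ys.map (derivers R)⟩ ∈ R' :=
      (hR' _).mpr ⟨(subsetLhs_map_derivers R x ys).symm, A, ht⟩
    refine mem_lang_node_iff.mpr ⟨_, hrule, ?_⟩
    rw [List.forall₂_map_left_iff, List.forall₂_same]
    intro y hy
    obtain ⟨B, -, hyB⟩ := hBs.exists_of_mem_right hy
    exact ih y hy hyB

end SubsetConstruction

theorem stmt13 {N alpha : Type} (R : Set (Rule N alpha)) (S : Set N)
    (R' : Set (Rule (Set N) alpha))
    (hR' : ∀ r' : Rule (Set N) alpha, r' ∈ R' ↔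
      (r'.lhs = {A | ∃ Bs : List N, Rule.mk A r'.sym Bs ∈ R ∧
          List.Forall₂ (fun (B : N) (B' : Set N) => B ∈ B') Bs r'.rhs} ∧
        r'.lhs.Nonempty)) :
    (⋃ s ∈ S, Lang R s) =
      ⋃ A' ∈ {A' : Set N | (A' ∩ S).Nonempty}, Lang R' A' := by
  ext t
  simp only [Set.mem_iUnion, Set.mem_ofPred_eq, exists_prop]
  constructor
  · rintro ⟨s, hs, ht⟩
    exact ⟨derivers R t, ⟨s, ht, hs⟩, mem_lang_derivers hR' ht⟩
  · rintro ⟨A', ⟨s, hsA', hs⟩, ht⟩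
    rw [eq_derivers_of_mem_lang hR' ht] at hsA'
    exact ⟨s, hs, hsA'⟩
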